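/- Let n ≥ 2. For each j ∈ {1,…,n} and a, x ∈ {0,1}, let ρ^{(j)}_{a|x} be a 2×2 density matrix, set A^{(j)}_x = ρ^{(j)}_{0|x} − ρ^{(j)}_{1|x}, and let {M_s}_{s∈{0,1}^n} be a POVM on ℂ^{2^n}. Then Σ_{s∈{0,1}^n} Tr(M_s W_s) ≤ 2^n · 2√2(n−1); equivalently, the success metric S = (1/(2^n (n−1) 2√2)) Σ_s Tr(M_s W_s) satisfies S ≤ 1. -/

import Mathlib

/-!
Each `A j x = ρ j 0 x - ρ j 1 x` is a traceless Hermitian 2×2 matrix of operator norm at most 1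
(a difference of two operators between `0` and `1`), and a traceless Hermitian 2×2 matrix `X`
satisfies `X * X = (-det X) • 1 = ‖X‖² • 1`. Hence every tensor product occurring in `W_s` squares
to a scalar, and its norm is the product of the norms of its factors. The triangle inequality then
gives `‖W_s‖ ≤ (n - 1) (‖A₀ + A₁‖ + ‖A₀ - A₁‖)` for the two observables `A₀, A₁` of the first site.
Since `-det` is a quadratic form, the parallelogram law
`‖A₀ + A₁‖² + ‖A₀ - A₁‖² = 2 ‖A₀‖² + 2 ‖A₁‖² ≤ 4` bounds this by `2√2 (n - 1)`. Finally
`Tr (M_s W_s) ≤ ‖W_s‖ Tr M_s` for positive `M_s`, and `∑ Tr M_s = Tr 1 = 2 ^ n`.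
-/

open Matrix Finset ComplexOrder

noncomputable section

/-- 2×2 complex matrices. -/
abbrev Mat2 := Matrix (Fin 2) (Fin 2) ℂ

/-- Tensor product of `n` 2×2 matrices, indexed by bit strings `Fin n → Fin 2`. -/
def tensorN (n : ℕ) (M : Fin n → Mat2) :
    Matrix (Fin n → Fin 2) (Fin n → Fin 2) ℂ :=
  Matrix.of fun f g => ∏ j, M j (f j) (g j)

/-- The operator `W_s` built from the observables `A^{(j)}_x`. -/
def Wop (n : ℕ) [NeZero n] (A : Fin n → Fin 2 → Mat2) (s : Fin n → Fin 2) :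
    Matrix (Fin n → Fin 2) (Fin n → Fin 2) ℂ :=
  (((n : ℂ) - 1) * (-1 : ℂ) ^ ((s 0 : ℕ))) •
      tensorN n (fun j => if j = 0 then A 0 0 + A 0 1 else A j 0)
    + ∑ j ∈ Finset.univ.filter (fun j : Fin n => j ≠ 0),
        ((-1 : ℂ) ^ ((s j : ℕ))) •
          tensorN n (fun k => if k = 0 then A 0 0 - A 0 1
            else if k = j then A j 1 else 1)

open scoped MatrixOrder Matrix.Norms.L2Operator

section CStar

variable {A : Type*} [CStarAlgebra A] [PartialOrder A] [StarOrderedRing A]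

lemma IsSelfAdjoint.norm_le_of_neg_le_of_le {a : A} (ha : IsSelfAdjoint a) {r : ℝ} (hr : 0 ≤ r)
    (h₁ : -algebraMap ℝ A r ≤ a) (h₂ : a ≤ algebraMap ℝ A r) : ‖a‖ ≤ r := by
  rcases subsingleton_or_nontrivial A with _ | _
  · simp [Subsingleton.elim a 0, hr]
  · rcases CStarAlgebra.norm_or_neg_norm_mem_spectrum ha with h | h
    · exact (le_algebraMap_iff_spectrum_le (a := a)).mp h₂ _ h
    · rw [← map_neg] at h₁
      linarith [(algebraMap_le_iff_le_spectrum (a := a)).mp h₁ _ h]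

end CStar

namespace Matrix

variable {m : Type*} [Fintype m] [DecidableEq m]

lemma PosSemidef.trace_mul_nonneg {P Q : Matrix m m ℂ} (hP : P.PosSemidef) (hQ : Q.PosSemidef) :
    0 ≤ (P * Q).trace := by
  obtain ⟨B, rfl⟩ := CStarAlgebra.nonneg_iff_eq_star_mul_self.mp hP.nonneg
  rw [Matrix.mul_assoc, Matrix.trace_mul_comm]
  exact (hQ.mul_mul_conjTranspose_same B).trace_nonneg

lemma IsHermitian.trace_mul_le_norm_mul_trace {W M : Matrix m m ℂ} (hW : W.IsHermitian)
    (hM : M.PosSemidef) : (M * W).trace ≤ (‖W‖ : ℂ) * M.trace := by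
  have h := hM.trace_mul_nonneg (le_iff.mp hW.isSelfAdjoint.le_algebraMap_norm_self)
  rwa [Algebra.algebraMap_eq_smul_one, Matrix.mul_sub, trace_sub, Matrix.mul_smul, Matrix.mul_one,
    trace_smul, Complex.real_smul, sub_nonneg] at h

lemma PosSemidef.norm_le_re_trace {ρ : Matrix m m ℂ} (hρ : ρ.PosSemidef) : ‖ρ‖ ≤ ρ.trace.re := by
  rcases isEmpty_or_nonempty m with _ | _
  · simp [Subsingleton.elim ρ 0]
  obtain ⟨i, hi⟩ := Set.ext_iff.mp hρ.1.spectrum_real_eq_range_eigenvalues _ |>.mp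
    (CStarAlgebra.norm_mem_spectrum_of_nonneg hρ.nonneg)
  rw [hρ.1.trace_eq_sum_eigenvalues, ← hi]
  simp only [Complex.re_sum]
  exact Finset.single_le_sum (fun j _ => hρ.eigenvalues_nonneg j) (Finset.mem_univ i)

lemma PosSemidef.le_one_of_trace_eq_one {ρ : Matrix m m ℂ} (hρ : ρ.PosSemidef)
    (hρ₁ : ρ.trace = 1) : ρ ≤ 1 :=
  (CStarAlgebra.norm_le_one_iff_of_nonneg ρ hρ.nonneg).mp (by simpa [hρ₁] using hρ.norm_le_re_trace)

lemma PosSemidef.norm_sub_le_one {ρ σ : Matrix m m ℂ} (hρ : ρ.PosSemidef) (hσ : σ.PosSemidef)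
    (hρ₁ : ρ.trace = 1) (hσ₁ : σ.trace = 1) : ‖ρ - σ‖ ≤ 1 := by
  refine (hρ.1.sub hσ.1).isSelfAdjoint.norm_le_of_neg_le_of_le zero_le_one ?_ ?_ <;> rw [map_one]
  · simpa using sub_le_sub hρ.nonneg (hσ.le_one_of_trace_eq_one hσ₁)
  · simpa using sub_le_sub (hρ.le_one_of_trace_eq_one hρ₁) hσ.nonneg

lemma IsHermitian.eq_norm_sq_of_mul_self_eq_smul_one [Nonempty m] {T : Matrix m m ℂ}
    (hT : T.IsHermitian) {c : ℂ} (h : T * T = c • 1) : c = ((‖T‖ ^ 2 : ℝ) : ℂ) := by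
  have hc : 0 ≤ c := by
    have := (posSemidef_conjTranspose_mul_self T).diag_nonneg (i := Classical.arbitrary m)
    simpa [hT.eq, h] using this
  have hnorm : ‖T‖ ^ 2 = ‖c‖ := by
    rw [sq, ← CStarRing.norm_star_mul_self, star_eq_conjTranspose, hT.eq, h, norm_smul, norm_one,
      mul_one]
  rw [hnorm]
  exact Complex.eq_coe_norm_of_nonneg hc

lemma mul_self_eq_neg_det_smul_one {X : Mat2} (h : X.trace = 0) : X * X = (-X.det) • 1 := by
  rw [trace_fin_two] at h
  ext i j
  fin_cases i <;> fin_cases j <;>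
    simp [Matrix.mul_apply, det_fin_two, eq_neg_of_add_eq_zero_right h] <;> ring

lemma IsHermitian.neg_det_eq_norm_sq {X : Mat2} (hX : X.IsHermitian) (h : X.trace = 0) :
    -X.det = ((‖X‖ ^ 2 : ℝ) : ℂ) :=
  hX.eq_norm_sq_of_mul_self_eq_smul_one (mul_self_eq_neg_det_smul_one h)

lemma det_add_add_det_sub (X Y : Mat2) : (X + Y).det + (X - Y).det = 2 * X.det + 2 * Y.det := by
  simp only [det_fin_two, add_apply, sub_apply]
  ring

lemma norm_add_add_norm_sub_le {X Y : Mat2} (hX : X.IsHermitian) (hY : Y.IsHermitian)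
    (hX₀ : X.trace = 0) (hY₀ : Y.trace = 0) (hX₁ : ‖X‖ ≤ 1) (hY₁ : ‖Y‖ ≤ 1) :
    ‖X + Y‖ + ‖X - Y‖ ≤ 2 * Real.sqrt 2 := by
  have parallelogram : ‖X + Y‖ ^ 2 + ‖X - Y‖ ^ 2 = 2 * ‖X‖ ^ 2 + 2 * ‖Y‖ ^ 2 := by
    have h := congrArg Neg.neg (det_add_add_det_sub X Y)
    rw [neg_add, neg_add, ← mul_neg, ← mul_neg, (hX.add hY).neg_det_eq_norm_sq (by simp [hX₀, hY₀]),
      (hX.sub hY).neg_det_eq_norm_sq (by simp [hX₀, hY₀]), hX.neg_det_eq_norm_sq hX₀,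
      hY.neg_det_eq_norm_sq hY₀] at h
    exact_mod_cast h
  nlinarith [sq_nonneg (‖X + Y‖ - ‖X - Y‖), Real.sq_sqrt (zero_le_two (α := ℝ)),
    Real.sqrt_nonneg 2, norm_nonneg (X + Y), norm_nonneg (X - Y), norm_nonneg X, norm_nonneg Y]

end Matrix

lemma tensorN_mul (n : ℕ) (M N : Fin n → Mat2) :
    tensorN n M * tensorN n N = tensorN n (fun j => M j * N j) := by
  ext f g
  simp only [tensorN, Matrix.mul_apply, Matrix.of_apply, ← Finset.prod_mul_distrib]
  rw [Finset.prod_univ_sum, Fintype.piFinset_univ]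

lemma tensorN_conjTranspose (n : ℕ) (M : Fin n → Mat2) :
    (tensorN n M)ᴴ = tensorN n (fun j => (M j)ᴴ) := by
  ext f g
  simp only [tensorN, Matrix.conjTranspose_apply, Matrix.of_apply, star_prod]

lemma tensorN_smul_one (n : ℕ) (c : Fin n → ℂ) :
    tensorN n (fun j => c j • 1) = (∏ j, c j) • 1 := by
  ext f g
  simp only [tensorN, Matrix.of_apply, Matrix.smul_apply, Matrix.one_apply, smul_eq_mul]
  by_cases h : f = g
  · simp [h]
  · obtain ⟨j, hj⟩ := Function.ne_iff.mp h
    rw [if_neg h, mul_zero]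
    exact Finset.prod_eq_zero (Finset.mem_univ j) (by simp [hj])

lemma isHermitian_tensorN {n : ℕ} {M : Fin n → Mat2} (h : ∀ j, (M j).IsHermitian) :
    (tensorN n M).IsHermitian := by
  rw [Matrix.IsHermitian, tensorN_conjTranspose]
  exact congrArg (tensorN n) (funext fun j => h j)

lemma norm_tensorN {n : ℕ} {S : Fin n → Mat2} (hS : ∀ k, (S k).IsHermitian)
    (hsq : ∀ k, ∃ c : ℂ, S k * S k = c • 1) : ‖tensorN n S‖ = ∏ k, ‖S k‖ := by
  choose c hc using hsq
  have hc_eq k : c k = ((‖S k‖ ^ 2 : ℝ) : ℂ) := (hS k).eq_norm_sq_of_mul_self_eq_smul_one (hc k)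
  have hsq : tensorN n S * tensorN n S = (∏ k, c k) • 1 := by
    rw [tensorN_mul, ← tensorN_smul_one]
    exact congrArg (tensorN n) (funext hc)
  have h := (isHermitian_tensorN hS).eq_norm_sq_of_mul_self_eq_smul_one hsq
  simp only [hc_eq, ← Complex.ofReal_prod, Complex.ofReal_inj, Finset.prod_pow] at h
  exact ((pow_left_inj₀ (Finset.prod_nonneg fun k _ => norm_nonneg _) (norm_nonneg _)
    two_ne_zero).mp h).symm

lemma norm_tensorN_le {n : ℕ} {S : Fin n → Mat2} (hS : ∀ k, (S k).IsHermitian)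
    (hsq : ∀ k, ∃ c : ℂ, S k * S k = c • 1) (j : Fin n) (h₁ : ∀ k ≠ j, ‖S k‖ ≤ 1) :
    ‖tensorN n S‖ ≤ ‖S j‖ := by
  rw [norm_tensorN hS hsq, ← Finset.mul_prod_erase _ _ (Finset.mem_univ j)]
  exact mul_le_of_le_one_right (norm_nonneg _) (Finset.prod_le_one (fun k _ => norm_nonneg _)
    fun k hk => h₁ k (Finset.ne_of_mem_erase hk))

section Wop

variable {n : ℕ} [NeZero n] {A : Fin n → Fin 2 → Mat2}

lemma isHermitian_Wop (hA : ∀ j x, (A j x).IsHermitian) (s : Fin n → Fin 2) :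
    (Wop n A s).IsHermitian := by
  have sign (k : ℕ) : IsSelfAdjoint ((-1 : ℂ) ^ k) := ((IsSelfAdjoint.one ℂ).neg).pow k
  refine IsSelfAdjoint.add (IsSelfAdjoint.smul ?_ (isHermitian_tensorN fun k => ?_))
    (isSelfAdjoint_sum _ fun j _ => IsSelfAdjoint.smul (sign _) (isHermitian_tensorN fun k => ?_))
  · exact ((IsSelfAdjoint.natCast n).sub (IsSelfAdjoint.one ℂ)).mul (sign _)
  · split_ifs
    exacts [(hA 0 0).add (hA 0 1), hA k 0]
  · split_ifs
    exacts [(hA 0 0).sub (hA 0 1), hA j 1, isHermitian_one]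

lemma norm_Wop_le (hA : ∀ j x, (A j x).IsHermitian) (hA₀ : ∀ j x, (A j x).trace = 0)
    (hA₁ : ∀ j x, ‖A j x‖ ≤ 1) (s : Fin n → Fin 2) :
    ‖Wop n A s‖ ≤ ((n : ℝ) - 1) * (‖A 0 0 + A 0 1‖ + ‖A 0 0 - A 0 1‖) := by
  have scalar_sq {X : Mat2} (hX : X.trace = 0) : ∃ c : ℂ, X * X = c • 1 :=
    ⟨_, mul_self_eq_neg_det_smul_one hX⟩
  have hT₀ : ‖tensorN n (fun k => if k = 0 then A 0 0 + A 0 1 else A k 0)‖ ≤ ‖A 0 0 + A 0 1‖ := by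
    refine norm_tensorN_le (fun k => ?_) (fun k => ?_) 0 (fun k hk => by simp [hk, hA₁])
    · split_ifs
      exacts [(hA 0 0).add (hA 0 1), hA k 0]
    · split_ifs
      exacts [scalar_sq (by simp [hA₀]), scalar_sq (hA₀ k 0)]
  have hT₁ (j : Fin n) (hj : j ≠ 0) : ‖tensorN n (fun k => if k = 0 then A 0 0 - A 0 1
      else if k = j then A j 1 else 1)‖ ≤ ‖A 0 0 - A 0 1‖ := by
    refine norm_tensorN_le (fun k => ?_) (fun k => ?_) 0 (fun k hk => ?_)
    · split_ifs
      exacts [(hA 0 0).sub (hA 0 1), hA j 1, isHermitian_one]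
    · split_ifs
      exacts [scalar_sq (by simp [hA₀]), scalar_sq (hA₀ j 1), ⟨1, by simp⟩]
    · rw [if_neg hk]
      split_ifs
      exacts [hA₁ j 1, norm_one.le]
  have hn : (1 : ℝ) ≤ n := by exact_mod_cast NeZero.one_le
  have hcard : ((Finset.univ.filter fun j : Fin n => j ≠ 0).card : ℝ) = n - 1 := by
    rw [Finset.filter_ne', Finset.card_erase_of_mem (Finset.mem_univ _), Finset.card_univ,
      Fintype.card_fin, Nat.cast_pred (NeZero.pos n)]
  have hcoef : ‖((n : ℂ) - 1) * (-1 : ℂ) ^ (s 0 : ℕ)‖ = n - 1 := by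
    rw [norm_mul, norm_pow, norm_neg, norm_one, one_pow, mul_one,
      show (n : ℂ) - 1 = ((n - 1 : ℝ) : ℂ) by push_cast; ring, Complex.norm_of_nonneg (by linarith)]
  calc ‖Wop n A s‖
      ≤ (n - 1) * ‖A 0 0 + A 0 1‖
        + ∑ j ∈ Finset.univ.filter (fun j : Fin n => j ≠ 0), ‖A 0 0 - A 0 1‖ := by
        refine (norm_add_le _ _).trans (add_le_add ?_ ((norm_sum_le _ _).trans ?_))
        · rw [norm_smul, hcoef]
          exact mul_le_mul_of_nonneg_left hT₀ (by linarith)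
        · refine Finset.sum_le_sum fun j hj => ?_
          rw [norm_smul, norm_pow, norm_neg, norm_one, one_pow, one_mul]
          exact hT₁ j (Finset.mem_filter.mp hj).2
    _ = ((n : ℝ) - 1) * (‖A 0 0 + A 0 1‖ + ‖A 0 0 - A 0 1‖) := by
        rw [Finset.sum_const, nsmul_eq_mul, hcard]
        ring

end Wop

theorem stmt5_general (n : ℕ) [NeZero n]
    (ρ : Fin n → Fin 2 → Fin 2 → Mat2)
    (hρpsd : ∀ j a x, (ρ j a x).PosSemidef)
    (hρtr : ∀ j a x, (ρ j a x).trace = 1)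
    (A : Fin n → Fin 2 → Mat2)
    (hA : ∀ j x, A j x = ρ j 0 x - ρ j 1 x)
    (M : (Fin n → Fin 2) → Matrix (Fin n → Fin 2) (Fin n → Fin 2) ℂ)
    (hMpsd : ∀ s, (M s).PosSemidef)
    (hMsum : ∑ s, M s = 1) :
    ∑ s, (M s * Wop n A s).trace
      ≤ (((2 : ℝ) ^ n * (2 * Real.sqrt 2 * ((n : ℝ) - 1)) : ℝ) : ℂ) := by
  have hAh j x : (A j x).IsHermitian := hA j x ▸ (hρpsd j 0 x).1.sub (hρpsd j 1 x).1
  have hA₀ j x : (A j x).trace = 0 := by rw [hA, trace_sub, hρtr, hρtr, sub_self]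
  have hA₁ j x : ‖A j x‖ ≤ 1 :=
    hA j x ▸ (hρpsd j 0 x).norm_sub_le_one (hρpsd j 1 x) (hρtr j 0 x) (hρtr j 1 x)
  have hW s : ‖Wop n A s‖ ≤ 2 * Real.sqrt 2 * ((n : ℝ) - 1) := by
    have hn : (0 : ℝ) ≤ n - 1 := sub_nonneg.mpr (by exact_mod_cast NeZero.one_le)
    refine (norm_Wop_le hAh hA₀ hA₁ s).trans ?_
    rw [mul_comm]
    exact mul_le_mul_of_nonneg_right (norm_add_add_norm_sub_le (hAh 0 0) (hAh 0 1) (hA₀ 0 0)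
      (hA₀ 0 1) (hA₁ 0 0) (hA₁ 0 1)) hn
  calc ∑ s, (M s * Wop n A s).trace
      ≤ ∑ s, (‖Wop n A s‖ : ℂ) * (M s).trace :=
        Finset.sum_le_sum fun s _ => (isHermitian_Wop hAh s).trace_mul_le_norm_mul_trace (hMpsd s)
    _ ≤ ∑ s, ((2 * Real.sqrt 2 * ((n : ℝ) - 1) : ℝ) : ℂ) * (M s).trace :=
        Finset.sum_le_sum fun s _ => mul_le_mul_of_nonneg_right
          (Complex.real_le_real.mpr (hW s)) (hMpsd s).trace_nonneg
    _ = (((2 : ℝ) ^ n * (2 * Real.sqrt 2 * ((n : ℝ) - 1)) : ℝ) : ℂ) := by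
        rw [← Finset.mul_sum, ← trace_sum, hMsum, trace_one, Fintype.card_fun, Fintype.card_fin,
          Fintype.card_fin]
        push_cast
        ring

/-- for density-matrix preparations and any POVM,
`Σ_s Tr(M_s W_s) ≤ 2^n · 2√2(n-1)`, i.e. the success metric is at most `1`. -/
theorem stmt5 (n : ℕ) [NeZero n] (hn : 2 ≤ n)
    (ρ : Fin n → Fin 2 → Fin 2 → Mat2)
    (hρpsd : ∀ j a x, (ρ j a x).PosSemidef)
    (hρtr : ∀ j a x, (ρ j a x).trace = 1)
    (A : Fin n → Fin 2 → Mat2)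
    (hA : ∀ j x, A j x = ρ j 0 x - ρ j 1 x)
    (M : (Fin n → Fin 2) → Matrix (Fin n → Fin 2) (Fin n → Fin 2) ℂ)
    (hMpsd : ∀ s, (M s).PosSemidef)
    (hMsum : ∑ s, M s = 1) :
    ∑ s, (M s * Wop n A s).trace
      ≤ (((2 : ℝ) ^ n * (2 * Real.sqrt 2 * ((n : ℝ) - 1)) : ℝ) : ℂ) :=
  stmt5_general n ρ hρpsd hρtr A hA M hMpsd hMsum
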